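/- For every graph G, gd(G) ≥ ed(G) + 1. -/

import Mathlib

/-!
Let `d` be realized by points `p i ∈ ℝ^r` and suppose every PSD matrix has a PSD completion of rank
at most `n + 1` on the diagonal and the edges. Completing the Gram matrix of the points `(p i, c)`
gives `q i ∈ ℝ^(n+1)` with `‖q i‖² = ‖p i‖² + c²` and the edge lengths of `p`. Inside a connected
component the `q i` stay within bounded distance of each other while their norms grow like `c`, so
every edge vector is orthogonal, up to `O(1/c)`, to the direction of the component's
representative. Projecting each component onto the orthogonal complement of that direction, a copy
of `ℝ^n`, gives configurations whose edge lengths converge to `d` as `c → ∞`, and compactness turns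
them into an exact representation of `d` in `ℝ^n`.
-/

open Matrix Finset

/-- The Gram dimension of a graph `G`: the smallest integer `k ≥ 1` such that every
positive semidefinite matrix indexed by the vertices admits a positive semidefinite
matrix of rank at most `k` agreeing with it on the diagonal and on the edges of `G`. -/
noncomputable def gd {V : Type} [Fintype V] (G : SimpleGraph V) : ℕ :=
  sInf {k : ℕ | 1 ≤ k ∧ ∀ X : Matrix V V ℝ, X.PosSemidef →
    ∃ Y : Matrix V V ℝ, Y.PosSemidef ∧ Y.rank ≤ k ∧
      (∀ i, Y i i = X i i) ∧ (∀ i j, G.Adj i j → Y i j = X i j)}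

/-- `d` has a Euclidean (distance) representation in `ℝ^k` for the graph `G`:
vectors `p i` with `‖p i − p j‖² = d i j` for all edges. -/
def HasEucRep {V : Type} [Fintype V] (G : SimpleGraph V) (d : V → V → ℝ) (k : ℕ) : Prop :=
  ∃ p : V → (Fin k → ℝ),
    ∀ i j, G.Adj i j → ∑ t, (p i t - p j t) ^ 2 = d i j

/-- `ed(G, d)`: the smallest `k` such that `d` has a Euclidean representation in `ℝ^k`. -/
noncomputable def edOf {V : Type} [Fintype V] (G : SimpleGraph V) (d : V → V → ℝ) : ℕ :=
  sInf {k : ℕ | HasEucRep G d k}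

/-- `ed(G)`: the maximum of `ed(G, d)` over all `d ∈ EDM(G)`. -/
noncomputable def edSup {V : Type} [Fintype V] (G : SimpleGraph V) : ℕ :=
  sSup {m : ℕ | ∃ d : V → V → ℝ, (∃ k, HasEucRep G d k) ∧ edOf G d = m}

open Module Filter Topology
open scoped RealInnerProductSpace MatrixOrder

def GramDimLE {V : Type} [Fintype V] (G : SimpleGraph V) (k : ℕ) : Prop :=
  ∀ X : Matrix V V ℝ, X.PosSemidef →
    ∃ Y : Matrix V V ℝ, Y.PosSemidef ∧ Y.rank ≤ k ∧
      (∀ i, Y i i = X i i) ∧ (∀ i j, G.Adj i j → Y i j = X i j)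

theorem nonempty_linearIsometry_of_finrank_le {E F : Type*}
    [NormedAddCommGroup E] [InnerProductSpace ℝ E] [FiniteDimensional ℝ E]
    [NormedAddCommGroup F] [InnerProductSpace ℝ F] [FiniteDimensional ℝ F]
    (h : finrank ℝ E ≤ finrank ℝ F) : Nonempty (E →ₗᵢ[ℝ] F) := by
  let b := stdOrthonormalBasis ℝ E
  let c := stdOrthonormalBasis ℝ F
  refine ⟨(b.toBasis.constr ℝ (c ∘ Fin.castLE h)).isometryOfOrthonormal
    (v := b.toBasis) (by simp) ?_⟩
  convert c.orthonormal.comp _ (Fin.castLE_injective h)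
  ext i
  simp

theorem Matrix.PosSemidef.exists_eq_inner_of_rank_le {V : Type*} [Fintype V]
    {F : Type*} [NormedAddCommGroup F] [InnerProductSpace ℝ F] [FiniteDimensional ℝ F]
    {Y : Matrix V V ℝ} (hY : Y.PosSemidef) (h : Y.rank ≤ finrank ℝ F) :
    ∃ q : V → F, ∀ i j, Y i j = ⟪q i, q j⟫ := by
  classical
  obtain ⟨B, rfl⟩ := CStarAlgebra.nonneg_iff_eq_star_mul_self.mp hY.nonneg
  let toL := (WithLp.linearEquiv 2 ℝ (V → ℝ)).symm
  let S := Submodule.span ℝ (Set.range (toL ∘ B.col))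
  have hS : finrank ℝ S = B.rank := by
    rw [rank_eq_finrank_span_cols, ← LinearEquiv.finrank_map_eq toL, Submodule.map_span,
      ← Set.range_comp]
    rfl
  rw [star_eq_conjTranspose, rank_conjTranspose_mul_self, ← hS] at h
  obtain ⟨ι⟩ := nonempty_linearIsometry_of_finrank_le h
  refine ⟨fun i => ι ⟨toL (B.col i), Submodule.subset_span ⟨i, rfl⟩⟩, fun i j => ?_⟩
  rw [ι.inner_map_map]
  simp [toL, Matrix.mul_apply, PiLp.inner_apply, mul_comm]

theorem exists_linearMap_norm_sq_eq_sub_inner_sq {F : Type*} [NormedAddCommGroup F]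
    [InnerProductSpace ℝ F] [FiniteDimensional ℝ F] {n : ℕ} (hF : finrank ℝ F ≤ n + 1)
    {w : F} (hw : ‖w‖ = 1) :
    ∃ T : F →ₗ[ℝ] EuclideanSpace ℝ (Fin n), ∀ z, ‖T z‖ ^ 2 = ‖z‖ ^ 2 - ⟪w, z⟫ ^ 2 := by
  have hK : finrank ℝ (ℝ ∙ w)ᗮ ≤ finrank ℝ (EuclideanSpace ℝ (Fin n)) := by
    have := (ℝ ∙ w).finrank_add_finrank_orthogonal
    rw [finrank_span_singleton (norm_ne_zero_iff.mp (by simp [hw]))] at this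
    rw [finrank_euclideanSpace_fin]
    omega
  obtain ⟨ι⟩ := nonempty_linearIsometry_of_finrank_le hK
  refine ⟨ι.toLinearMap ∘ₗ (ℝ ∙ w)ᗮ.orthogonalProjectionOnto.toLinearMap, fun z => ?_⟩
  have := Submodule.norm_sq_eq_add_norm_sq_starProjection z (ℝ ∙ w)
  rw [Submodule.starProjection_unit_singleton ℝ hw, norm_smul, hw, mul_one, Real.norm_eq_abs,
    sq_abs] at this
  simp only [LinearMap.comp_apply, LinearIsometry.coe_toLinearMap, ι.norm_map]
  rw [this]
  simp

theorem exists_projection_orthogonal_to_reps {V F : Type*} [NormedAddCommGroup F]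
    [InnerProductSpace ℝ F] [FiniteDimensional ℝ F] {n : ℕ} (hF : finrank ℝ F ≤ n + 1)
    (q : V → F) (rep : V → V) (hq : ∀ v, q v ≠ 0) :
    ∃ x : V → EuclideanSpace ℝ (Fin n), (∀ i, ‖x i‖ ≤ ‖q i - q (rep i)‖) ∧
      ∀ i j, rep i = rep j →
        ‖x i - x j‖ ^ 2 = ‖q i - q j‖ ^ 2 - ⟪‖q (rep i)‖⁻¹ • q (rep i), q i - q j⟫ ^ 2 := by
  choose T hT using fun v => exists_linearMap_norm_sq_eq_sub_inner_sq hF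
    (norm_smul_inv_norm (𝕜 := ℝ) (hq v))
  refine ⟨fun i => T (rep i) (q i - q (rep i)), fun i => ?_, fun i j hij => ?_⟩
  · rw [← pow_le_pow_iff_left₀ (norm_nonneg _) (norm_nonneg _) two_ne_zero, hT]
    nlinarith [sq_nonneg ⟪‖q (rep i)‖⁻¹ • q (rep i), q i - q (rep i)⟫]
  · dsimp only
    rw [hij, ← map_sub, sub_sub_sub_cancel_right]
    exact hT _ _

theorem two_mul_inner_sub_eq {E : Type*} [NormedAddCommGroup E] [InnerProductSpace ℝ E]
    (u x y : E) :
    2 * ⟪u, x - y⟫ = ‖x‖ ^ 2 - ‖y‖ ^ 2 - ‖x - u‖ ^ 2 + ‖y - u‖ ^ 2 := by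
  rw [norm_sub_sq_real, norm_sub_sq_real, inner_sub_right, real_inner_comm x, real_inner_comm y]
  ring

theorem tendsto_inner_normalize_sub {E : Type*} [NormedAddCommGroup E] [InnerProductSpace ℝ E]
    {u x y : ℕ → E} {a R : ℝ} (hxy : ∀ m, ‖x m‖ ^ 2 - ‖y m‖ ^ 2 = a)
    (hx : ∀ m, ‖x m - u m‖ ≤ R) (hy : ∀ m, ‖y m - u m‖ ≤ R)
    (hu : Tendsto (fun m => ‖u m‖) atTop atTop) :
    Tendsto (fun m => ⟪‖u m‖⁻¹ • u m, x m - y m⟫) atTop (𝓝 0) := by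
  have hbound : ∀ m, ‖⟪‖u m‖⁻¹ • u m, x m - y m⟫‖ ≤ ‖u m‖⁻¹ * (|a| + 2 * R ^ 2) := by
    intro m
    have hpolar := two_mul_inner_sub_eq (u m) (x m) (y m)
    rw [hxy] at hpolar
    have h1 : ‖x m - u m‖ ^ 2 ≤ R ^ 2 := pow_le_pow_left₀ (norm_nonneg _) (hx m) 2
    have h2 : ‖y m - u m‖ ^ 2 ≤ R ^ 2 := pow_le_pow_left₀ (norm_nonneg _) (hy m) 2
    have h3 : |⟪u m, x m - y m⟫| ≤ |a| + 2 * R ^ 2 := by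
      rw [abs_le]
      constructor <;> nlinarith [le_abs_self a, neg_abs_le a, sq_nonneg ‖x m - u m‖,
        sq_nonneg ‖y m - u m‖]
    rw [real_inner_smul_left, norm_mul, Real.norm_eq_abs, abs_inv, abs_norm, Real.norm_eq_abs]
    exact mul_le_mul_of_nonneg_left h3 (by positivity)
  refine squeeze_zero_norm hbound ?_
  simpa using (tendsto_inv_atTop_zero.comp hu).mul_const (|a| + 2 * R ^ 2)

theorem SimpleGraph.Walk.norm_sub_le_length_mul {V E : Type*} [SeminormedAddCommGroup E]
    {G : SimpleGraph V} {f : V → E} {B : ℝ} (hf : ∀ a b, G.Adj a b → ‖f a - f b‖ ≤ B)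
    {a b : V} (W : G.Walk a b) : ‖f a - f b‖ ≤ W.length * B := by
  induction W with
  | nil => simp
  | @cons u v w huv W ih =>
    calc ‖f u - f w‖ ≤ ‖f u - f v‖ + ‖f v - f w‖ := norm_sub_le_norm_sub_add_norm_sub _ _ _
      _ ≤ B + W.length * B := add_le_add (hf u v huv) ih
      _ = (W.cons huv).length * B := by rw [length_cons]; push_cast; ring

theorem SimpleGraph.Reachable.norm_sub_le_card_mul {V E : Type*} [Fintype V]
    [SeminormedAddCommGroup E] {G : SimpleGraph V} {f : V → E} {B : ℝ} (hB : 0 ≤ B)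
    (hf : ∀ a b, G.Adj a b → ‖f a - f b‖ ≤ B) {a b : V} (h : G.Reachable a b) :
    ‖f a - f b‖ ≤ Fintype.card V * B := by
  classical
  obtain ⟨W, hW⟩ := h.exists_isPath
  calc ‖f a - f b‖ ≤ W.length * B := W.norm_sub_le_length_mul hf
    _ ≤ Fintype.card V * B := by gcongr; exact_mod_cast hW.length_lt.le

theorem hasEucRep_iff {V : Type} [Fintype V] {G : SimpleGraph V} {d : V → V → ℝ} {k : ℕ} :
    HasEucRep G d k ↔
      ∃ p : V → EuclideanSpace ℝ (Fin k), ∀ i j, G.Adj i j → ‖p i - p j‖ ^ 2 = d i j := by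
  simp only [EuclideanSpace.real_norm_sq_eq, PiLp.sub_apply]
  exact ⟨fun ⟨p, hp⟩ => ⟨fun i => WithLp.toLp 2 (p i), hp⟩, fun ⟨p, hp⟩ => ⟨fun i => p i, hp⟩⟩

theorem hasEucRep_of_tendsto {V : Type} [Fintype V] {G : SimpleGraph V} {d : V → V → ℝ}
    {n : ℕ} (x : ℕ → V → EuclideanSpace ℝ (Fin n)) {R : ℝ} (hx : ∀ m i, ‖x m i‖ ≤ R)
    (hd : ∀ i j, G.Adj i j → Tendsto (fun m => ‖x m i - x m j‖ ^ 2) atTop (𝓝 (d i j))) :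
    HasEucRep G d n := by
  have hbdd : Bornology.IsBounded (Set.range x) := isBounded_iff_forall_norm_le.2
    ⟨max R 0, by
      rintro _ ⟨m, rfl⟩
      exact (pi_norm_le_iff_of_nonneg (le_max_right _ _)).2 fun i =>
        (hx m i).trans (le_max_left _ _)⟩
  obtain ⟨y, -, φ, hφ, hlim⟩ := tendsto_subseq_of_bounded hbdd (Set.mem_range_self ·)
  refine hasEucRep_iff.2 ⟨y, fun i j hij =>
    tendsto_nhds_unique ?_ ((hd i j hij).comp hφ.tendsto_atTop)⟩
  exact (((continuous_apply i).tendsto y).comp hlim |>.sub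
    (((continuous_apply j).tendsto y).comp hlim)).norm.pow 2

theorem gramDimLE_of_card_le {V : Type} [Fintype V] (G : SimpleGraph V) {k : ℕ}
    (h : Fintype.card V ≤ k) : GramDimLE G k :=
  fun X hX => ⟨X, hX, X.rank_le_card_width.trans h, fun _ => rfl, fun _ _ _ => rfl⟩

theorem GramDimLE.exists_lift {V : Type} [Fintype V] {G : SimpleGraph V} {k : ℕ}
    (hG : GramDimLE G k) {E : Type*} [NormedAddCommGroup E] [InnerProductSpace ℝ E]
    (p : V → E) (c : ℝ) :
    ∃ q : V → EuclideanSpace ℝ (Fin k), (∀ i, ‖q i‖ ^ 2 = ‖p i‖ ^ 2 + c ^ 2) ∧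
      ∀ i j, G.Adj i j → ‖q i - q j‖ = ‖p i - p j‖ := by
  obtain ⟨Y, hY, hrank, hdiag, hadj⟩ := hG (gram ℝ p + vecMulVec (fun _ => c) (fun _ => c))
    ((posSemidef_gram ℝ p).add (posSemidef_vecMulVec_self_star _))
  obtain ⟨q, hq⟩ := hY.exists_eq_inner_of_rank_le (F := EuclideanSpace ℝ (Fin k)) (by simpa)
  have hdiag' : ∀ i, ‖q i‖ ^ 2 = ‖p i‖ ^ 2 + c ^ 2 := fun i => by
    rw [← real_inner_self_eq_norm_sq, ← hq, hdiag, Matrix.add_apply, gram_apply,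
      real_inner_self_eq_norm_sq, vecMulVec_apply, sq c]
  refine ⟨q, hdiag', fun i j hij => ?_⟩
  have hij' : ⟪q i, q j⟫ = ⟪p i, p j⟫ + c ^ 2 := by
    rw [← hq, hadj i j hij, Matrix.add_apply, gram_apply, vecMulVec_apply, sq c]
  rw [← sq_eq_sq₀ (norm_nonneg _) (norm_nonneg _), norm_sub_sq_real, norm_sub_sq_real, hij',
    hdiag', hdiag']
  ring

theorem HasEucRep.of_gramDimLE_succ {V : Type} [Fintype V] {G : SimpleGraph V}
    {d : V → V → ℝ} {r n : ℕ} (hd : HasEucRep G d r) (hG : GramDimLE G (n + 1)) :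
    HasEucRep G d n := by
  obtain ⟨p, hp⟩ := hasEucRep_iff.mp hd
  choose q hq_norm hq_adj using fun m : ℕ => hG.exists_lift p ((m : ℝ) + 1)
  have hq_large : ∀ (m : ℕ) v, (m : ℝ) + 1 ≤ ‖q m v‖ := fun m v => by
    rw [← pow_le_pow_iff_left₀ (by positivity) (norm_nonneg _) two_ne_zero, hq_norm]
    nlinarith [sq_nonneg ‖p v‖]
  let rep : V → V := fun i => (G.connectedComponentMk i).out
  have hrep_adj : ∀ i j, G.Adj i j → rep i = rep j := fun i j hij =>
    congrArg Quot.out (SimpleGraph.ConnectedComponent.connectedComponentMk_eq_of_adj hij)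
  have hrep_reach : ∀ i, G.Reachable i (rep i) := fun i =>
    (SimpleGraph.ConnectedComponent.exact (G.connectedComponentMk i).out_eq).symm
  set B := ∑ ab : V × V, ‖p ab.1 - p ab.2‖
  have hB : ∀ a b, ‖p a - p b‖ ≤ B := fun a b => by
    have := single_le_sum (f := fun ab : V × V => ‖p ab.1 - p ab.2‖)
      (fun _ _ => norm_nonneg _) (mem_univ (a, b))
    exact this
  have hR : ∀ m i, ‖q m i - q m (rep i)‖ ≤ Fintype.card V * B := fun m i =>
    (hrep_reach i).norm_sub_le_card_mul (sum_nonneg fun _ _ => norm_nonneg _)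
      fun a b hab => (hq_adj m a b hab).trans_le (hB a b)
  have hq_ne : ∀ m v, q m v ≠ 0 := fun m v =>
    norm_pos_iff.mp ((by positivity : (0 : ℝ) < m + 1).trans_le (hq_large m v))
  choose x hx_le hx_adj using fun m =>
    exists_projection_orthogonal_to_reps (finrank_euclideanSpace_fin).le (q m) rep (hq_ne m)
  refine hasEucRep_of_tendsto x (fun m i => (hx_le m i).trans (hR m i)) fun i j hij => ?_
  have hradial := tendsto_inner_normalize_sub (u := fun m => q m (rep i))
    (x := fun m => q m i) (y := fun m => q m j) (a := ‖p i‖ ^ 2 - ‖p j‖ ^ 2)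
    (fun m => by rw [hq_norm, hq_norm]; ring) (hR · i) (fun m => hrep_adj i j hij ▸ hR m j)
    (tendsto_atTop_mono (hq_large · (rep i))
      (tendsto_atTop_add_const_right _ _ tendsto_natCast_atTop_atTop))
  simp_rw [hx_adj _ i j (hrep_adj i j hij), hq_adj _ i j hij, hp i j hij]
  simpa using tendsto_const_nhds.sub (hradial.pow 2)

theorem edSup_add_one_le_gd {V : Type} [Fintype V] (G : SimpleGraph V) :
    edSup G + 1 ≤ gd G := by
  refine le_csInf ⟨max 1 (Fintype.card V), le_max_left _ _,
    gramDimLE_of_card_le G (le_max_right _ _)⟩ ?_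
  rintro k ⟨hk, hG⟩
  obtain ⟨n, rfl⟩ : ∃ n, k = n + 1 := ⟨k - 1, by omega⟩
  refine Nat.add_le_add_right (csSup_le' ?_) 1
  rintro _ ⟨d, ⟨r, hd⟩, rfl⟩
  exact Nat.sInf_le (hd.of_gramDimLE_succ hG)
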